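/- arXiv:2103.08124 — 6 statements merged into one kernel-verified Lean document; each statement's English description precedes it below -/
import Mathlib

section
/- Let d ≥ 1, let Ω be a skew-symmetric (d+1)×(d+1) real matrix and X : [0,∞) → ℝ^{d+1} continuous. Let x_k, x_l : [0,∞) → S^d be differentiable curves satisfying ẋ(t) = Ωx(t) + X(t) − ⟨x(t),X(t)⟩x(t) for all t ≥ 0. Then for every t ≥ 0, ‖x_k(t) − x_l(t)‖ = ‖x_k(0) − x_l(0)‖ · exp(−(1/2)∫₀ᵗ ⟨X(s), x_k(s) + x_l(s)⟩ ds). In particular, if x_k(0) ≠ x_l(0) then x_k(t) ≠ x_l(t) for all t ≥ 0. -/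
open MeasureTheory Metric Filter Matrix
open scoped RealInnerProductSpace

noncomputable abbrev Euc (d : ℕ) : Type := EuclideanSpace ℝ (Fin (d+1))

/-!
Put `u = x_k - x_l`. In `d/dt ‖u‖² = 2⟪u, u̇⟫` the skew term `⟪u, Ωu⟫` vanishes, and since
`‖x_k‖ = ‖x_l‖ = 1` the remaining terms collapse to `-⟪X, x_k + x_l⟫ ‖u‖²`. This scalar linear
ODE is solved by an integrating factor, and taking square roots gives the formula; the
exponential never vanishes, so distinct particles never collide.
-/

open Set Real

theorem Matrix.inner_toEuclideanLin_self_of_transpose_eq_neg {n : Type*} [Fintype n]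
    [DecidableEq n] {Ω : Matrix n n ℝ} (hΩ : Ωᵀ = -Ω) (v : EuclideanSpace ℝ n) :
    ⟪v, Matrix.toEuclideanLin Ω v⟫ = 0 := by
  have h : ⟪v, Matrix.toEuclideanLin Ω v⟫ = -⟪v, Matrix.toEuclideanLin Ω v⟫ := by
    calc ⟪v, Matrix.toEuclideanLin Ω v⟫
        = ⟪Matrix.toEuclideanLin Ωᴴ v, v⟫ := by
          rw [Matrix.toEuclideanLin_conjTranspose_eq_adjoint, LinearMap.adjoint_inner_left]
      _ = -⟪v, Matrix.toEuclideanLin Ω v⟫ := by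
          rw [conjTranspose_eq_transpose_of_trivial, hΩ, map_neg, LinearMap.neg_apply,
            inner_neg_left, real_inner_comm]
  linarith

theorem hasDerivWithinAt_integral_Icc {g : ℝ → ℝ} {a b t : ℝ} (hg : ContinuousOn g (Icc a b))
    (ht : t ∈ Icc a b) :
    HasDerivWithinAt (fun u => ∫ s in a..u, g s) (g t) (Icc a b) t := by
  have : Fact (t ∈ Icc a b) := ⟨ht⟩
  exact intervalIntegral.integral_hasDerivWithinAt_right
    ((hg.mono (uIcc_subset_Icc ⟨le_rfl, ht.1.trans ht.2⟩ ht)).intervalIntegrable)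
    (hg.stronglyMeasurableAtFilter_nhdsWithin measurableSet_Icc t) (hg t ht)

theorem eq_mul_exp_neg_integral_of_hasDerivWithinAt {f g : ℝ → ℝ} {a b : ℝ}
    (hg : ContinuousOn g (Icc a b))
    (hf : ∀ t ∈ Icc a b, HasDerivWithinAt f (-(g t) * f t) (Icc a b) t) :
    ∀ t ∈ Icc a b, f t = f a * exp (-∫ s in a..t, g s) := by
  intro t ht
  have ha : a ∈ Icc a b := ⟨le_rfl, ht.1.trans ht.2⟩
  -- integrating factor
  have hderiv : ∀ u ∈ Icc a b, HasDerivWithinAt (fun u => f u * exp (∫ s in a..u, g s)) 0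
      (Icc a b) u := by
    intro u hu
    exact ((hf u hu).mul (hasDerivWithinAt_integral_Icc hg hu).exp).congr_deriv (by ring)
  have hconst := (convex_Icc a b).norm_image_sub_le_of_norm_hasDerivWithin_le hderiv
    (fun _ _ => norm_zero.le) ha ht
  rw [zero_mul, norm_le_zero_iff, sub_eq_zero, intervalIntegral.integral_same, exp_zero,
    mul_one] at hconst
  rw [← hconst, mul_assoc, ← exp_add, add_neg_cancel, exp_zero, mul_one]

section VectorModel

variable {E : Type*} [NormedAddCommGroup E] [InnerProductSpace ℝ E]

def vectorModelField (A : E →ₗ[ℝ] E) (X x : E) : E :=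
  A x + X - ⟪x, X⟫ • x

theorem two_mul_inner_sub_vectorModelField_sub {A : E →ₗ[ℝ] E} (hA : ∀ v, ⟪v, A v⟫ = 0)
    (X : E) {x y : E} (hx : ‖x‖ = 1) (hy : ‖y‖ = 1) :
    2 * ⟪x - y, vectorModelField A X x - vectorModelField A X y⟫ =
      -⟪X, x + y⟫ * ‖x - y‖ ^ 2 := by
  have hxx : ⟪x, x⟫ = 1 := by rw [real_inner_self_eq_norm_sq, hx, one_pow]
  have hyy : ⟪y, y⟫ = 1 := by rw [real_inner_self_eq_norm_sq, hy, one_pow]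
  have hsplit : vectorModelField A X x - vectorModelField A X y =
      A (x - y) + (⟪y, X⟫ • y - ⟪x, X⟫ • x) := by
    simp only [vectorModelField, map_sub]; abel
  rw [hsplit, inner_add_right, hA, ← real_inner_self_eq_norm_sq]
  simp only [inner_sub_left, inner_sub_right, inner_add_right, real_inner_smul_right, hxx, hyy,
    real_inner_comm x y, real_inner_comm X x, real_inner_comm X y]
  ring

theorem norm_sub_eq_of_hasDerivWithinAt_vectorModelField {A : E →ₗ[ℝ] E}
    (hA : ∀ v, ⟪v, A v⟫ = 0) {X x y : ℝ → E} {a b : ℝ} (hX : ContinuousOn X (Icc a b))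
    (hx1 : ∀ t ∈ Icc a b, ‖x t‖ = 1) (hy1 : ∀ t ∈ Icc a b, ‖y t‖ = 1)
    (hx : ∀ t ∈ Icc a b, HasDerivWithinAt x (vectorModelField A (X t) (x t)) (Icc a b) t)
    (hy : ∀ t ∈ Icc a b, HasDerivWithinAt y (vectorModelField A (X t) (y t)) (Icc a b) t) :
    ∀ t ∈ Icc a b, ‖x t - y t‖ =
      ‖x a - y a‖ * exp (-(1/2) * ∫ s in a..t, ⟪X s, x s + y s⟫) := by
  have hxC : ContinuousOn x (Icc a b) := fun t ht => (hx t ht).continuousWithinAt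
  have hyC : ContinuousOn y (Icc a b) := fun t ht => (hy t ht).continuousWithinAt
  have hsq := eq_mul_exp_neg_integral_of_hasDerivWithinAt (f := fun t => ‖x t - y t‖ ^ 2)
    (g := fun s => ⟪X s, x s + y s⟫) (hX.inner (hxC.add hyC)) fun t ht =>
      ((hx t ht).sub (hy t ht)).norm_sq.congr_deriv
        (two_mul_inner_sub_vectorModelField_sub hA (X t) (hx1 t ht) (hy1 t ht))
  intro t ht
  rw [← sq_eq_sq₀ (norm_nonneg _) (by positivity), hsq t ht, mul_pow, ← exp_nat_mul]
  ring_nf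

end VectorModel

theorem distance_formula_and_collisionless_general
    (d : ℕ)
    (Ω : Matrix (Fin (d+1)) (Fin (d+1)) ℝ) (hΩ : Ωᵀ = -Ω)
    (X : ℝ → Euc d) (hX : ContinuousOn X (Set.Ici 0))
    (xk xl : ℝ → Euc d)
    (hxkS : ∀ t ≥ (0:ℝ), ‖xk t‖ = 1) (hxlS : ∀ t ≥ (0:ℝ), ‖xl t‖ = 1)
    (hxk : ∀ t ≥ (0:ℝ), HasDerivWithinAt xk
      (Matrix.toEuclideanLin Ω (xk t) + X t - ⟪xk t, X t⟫ • xk t) (Set.Ici 0) t)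
    (hxl : ∀ t ≥ (0:ℝ), HasDerivWithinAt xl
      (Matrix.toEuclideanLin Ω (xl t) + X t - ⟪xl t, X t⟫ • xl t) (Set.Ici 0) t) :
    (∀ t ≥ (0:ℝ), ‖xk t - xl t‖ = ‖xk 0 - xl 0‖ *
        Real.exp (-(1/2) * ∫ s in (0:ℝ)..t, ⟪X s, xk s + xl s⟫)) ∧
    (xk 0 ≠ xl 0 → ∀ t ≥ (0:ℝ), xk t ≠ xl t) := by
  have formula : ∀ t ≥ (0:ℝ), ‖xk t - xl t‖ = ‖xk 0 - xl 0‖ *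
      exp (-(1/2) * ∫ s in (0:ℝ)..t, ⟪X s, xk s + xl s⟫) := fun t ht =>
    norm_sub_eq_of_hasDerivWithinAt_vectorModelField
      (inner_toEuclideanLin_self_of_transpose_eq_neg hΩ) (hX.mono Icc_subset_Ici_self)
      (fun s hs => hxkS s hs.1) (fun s hs => hxlS s hs.1)
      (fun s hs => (hxk s hs.1).mono Icc_subset_Ici_self)
      (fun s hs => (hxl s hs.1).mono Icc_subset_Ici_self) t ⟨ht, le_rfl⟩
  refine ⟨formula, fun hne t ht hcoll => ?_⟩
  have hpos : 0 < ‖xk 0 - xl 0‖ * exp (-(1/2) * ∫ s in (0:ℝ)..t, ⟪X s, xk s + xl s⟫) :=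
    mul_pos (norm_pos_iff.2 (sub_ne_zero.2 hne)) (exp_pos _)
  rw [← formula t ht, hcoll, sub_self, norm_zero] at hpos
  exact lt_irrefl 0 hpos

/-- For two solutions of the vector model on the sphere, the distance satisfies
the explicit exponential formula, hence collisionless. -/
theorem distance_formula_and_collisionless
    (d : ℕ) (hd : 1 ≤ d)
    (Ω : Matrix (Fin (d+1)) (Fin (d+1)) ℝ) (hΩ : Ωᵀ = -Ω)
    (X : ℝ → Euc d) (hX : ContinuousOn X (Set.Ici 0))
    (xk xl : ℝ → Euc d)
    (hxkS : ∀ t ≥ (0:ℝ), ‖xk t‖ = 1) (hxlS : ∀ t ≥ (0:ℝ), ‖xl t‖ = 1)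
    (hxk : ∀ t ≥ (0:ℝ), HasDerivWithinAt xk
      (Matrix.toEuclideanLin Ω (xk t) + X t - ⟪xk t, X t⟫ • xk t) (Set.Ici 0) t)
    (hxl : ∀ t ≥ (0:ℝ), HasDerivWithinAt xl
      (Matrix.toEuclideanLin Ω (xl t) + X t - ⟪xl t, X t⟫ • xl t) (Set.Ici 0) t) :
    (∀ t ≥ (0:ℝ), ‖xk t - xl t‖ = ‖xk 0 - xl 0‖ *
        Real.exp (-(1/2) * ∫ s in (0:ℝ)..t, ⟪X s, xk s + xl s⟫)) ∧
    (xk 0 ≠ xl 0 → ∀ t ≥ (0:ℝ), xk t ≠ xl t) :=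
  distance_formula_and_collisionless_general d Ω hΩ X hX xk xl hxkS hxlS hxk hxl
end

section
/- Let d ≥ 1, let Ω be a skew-symmetric (d+1)×(d+1) real matrix and X : [0,∞) → ℝ^{d+1} continuous. Let x_1, x_2, x_3, x_4 : [0,∞) → S^d be differentiable curves each satisfying ẋ(t) = Ωx(t) + X(t) − ⟨x(t),X(t)⟩x(t), with x_1(0) ≠ x_2(0), x_2(0) ≠ x_3(0), x_3(0) ≠ x_4(0) and x_4(0) ≠ x_1(0). Then the cross ratio is a constant of motion: C(x_1(t), x_2(t), x_3(t), x_4(t)) = C(x_1(0), x_2(0), x_3(0), x_4(0)) for all t ≥ 0. -/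
open MeasureTheory Metric Filter Matrix
open scoped RealInnerProductSpace

/-- The cross ratio of four points. -/
noncomputable def crossRatio {d : ℕ} (x1 x2 x3 x4 : Euc d) : ℝ :=
  (‖x1 - x2‖ ^ 2 * ‖x3 - x4‖ ^ 2) / (‖x2 - x3‖ ^ 2 * ‖x4 - x1‖ ^ 2)

/-!
For two solutions `y, z` on the sphere, the `Ω`-term drops out of the derivative of `‖y - z‖²`
by skew-symmetry, and the sphere constraint gives
`d/dt ‖y - z‖² = -(⟪y, X⟫ + ⟪z, X⟫) ‖y - z‖²`. Hence `‖y(t) - z(t)‖² = λ_y(t) λ_z(t) ‖y(0) - z(0)‖²`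
with `λ_x(t) = exp (-∫₀ᵗ ⟪x, X⟫)`, and in the cross ratio every `λ_{x_i}` occurs once in the
numerator and once in the denominator.
-/

open Set

theorem hasDerivWithinAt_integral_Ici {g : ℝ → ℝ} {a u : ℝ} (hg : ContinuousOn g (Ici a))
    (hu : a ≤ u) : HasDerivWithinAt (fun v ↦ ∫ s in a..v, g s) (g u) (Ici u) u := by
  have hsub : Ioi u ⊆ Ici a := Ioi_subset_Ici_self.trans (Ici_subset_Ici.mpr hu)
  refine intervalIntegral.integral_hasDerivWithinAt_right ?_ ?_ ((hg u hu).mono hsub)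
  · exact (hg.mono (by simpa [uIcc_of_le hu] using Icc_subset_Ici_self)).intervalIntegrable
  · exact ⟨Ici a, mem_of_superset self_mem_nhdsWithin hsub,
      hg.aestronglyMeasurable measurableSet_Ici⟩

theorem eq_mul_exp_neg_integral_of_hasDerivWithinAt_s1 {F g : ℝ → ℝ} {a t : ℝ}
    (hg : ContinuousOn g (Ici a))
    (hF : ∀ u ≥ a, HasDerivWithinAt F (-g u * F u) (Ici a) u) (ht : a ≤ t) :
    F t = F a * Real.exp (-∫ s in a..t, g s) := by
  set G : ℝ → ℝ := fun v ↦ ∫ s in a..v, g s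
  have hG_cont : ContinuousOn G (Icc a t) := by
    rw [← uIcc_of_le ht]
    exact intervalIntegral.continuousOn_primitive_interval
      ((hg.mono (by simpa [uIcc_of_le ht] using Icc_subset_Ici_self)).integrableOn_compact
        isCompact_uIcc)
  have hF_cont : ContinuousOn F (Icc a t) := fun u hu ↦
    (hF u hu.1).continuousWithinAt.mono Icc_subset_Ici_self
  have hderiv : ∀ u ∈ Ico a t, HasDerivWithinAt (fun v ↦ F v * Real.exp (G v)) 0 (Ici u) u := by
    intro u hu
    refine (((hF u hu.1).mono (Ici_subset_Ici.mpr hu.1)).fun_mul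
      (hasDerivWithinAt_integral_Ici hg hu.1).exp).congr_deriv ?_
    ring
  have hconst := constant_of_has_deriv_right_zero (hF_cont.mul hG_cont.rexp) hderiv t
    (right_mem_Icc.mpr ht)
  simp only [G, Pi.mul_apply, intervalIntegral.integral_same, Real.exp_zero, mul_one] at hconst
  rw [Real.exp_neg, ← hconst, mul_inv_cancel_right₀ (Real.exp_ne_zero _)]

section VectorModel

variable {E : Type*} [NormedAddCommGroup E] [InnerProductSpace ℝ E]

def vectorModel (A : E →ₗ[ℝ] E) (w x : E) : E := A x + w - ⟪x, w⟫ • x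

theorem inner_sub_vectorModel_sub {A : E →ₗ[ℝ] E} (hA : ∀ v, ⟪v, A v⟫ = 0) (w : E) {y z : E}
    (hy : ‖y‖ = 1) (hz : ‖z‖ = 1) :
    2 * ⟪y - z, vectorModel A w y - vectorModel A w z⟫ = -(⟪y, w⟫ + ⟪z, w⟫) * ‖y - z‖ ^ 2 := by
  have hyy : ⟪y, y⟫ = 1 := by rw [real_inner_self_eq_norm_sq, hy, one_pow]
  have hzz : ⟪z, z⟫ = 1 := by rw [real_inner_self_eq_norm_sq, hz, one_pow]
  have hskew := hA (y - z)
  rw [← real_inner_self_eq_norm_sq]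
  simp only [vectorModel, map_sub, inner_sub_left, inner_sub_right, inner_add_right,
    real_inner_smul_right] at hskew ⊢
  rw [real_inner_comm z y] at *
  linear_combination (2:ℝ) * hskew + (⟪z, w⟫ - ⟪y, w⟫) * hyy + (⟪y, w⟫ - ⟪z, w⟫) * hzz

theorem norm_sub_sq_eq_of_hasDerivWithinAt_vectorModel {A : E →ₗ[ℝ] E}
    (hA : ∀ v, ⟪v, A v⟫ = 0) {w y z : ℝ → E} (hw : ContinuousOn w (Ici 0))
    (hy : ∀ t ≥ (0:ℝ), ‖y t‖ = 1) (hz : ∀ t ≥ (0:ℝ), ‖z t‖ = 1)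
    (hy' : ∀ t ≥ (0:ℝ), HasDerivWithinAt y (vectorModel A (w t) (y t)) (Ici 0) t)
    (hz' : ∀ t ≥ (0:ℝ), HasDerivWithinAt z (vectorModel A (w t) (z t)) (Ici 0) t)
    {t : ℝ} (ht : 0 ≤ t) :
    ‖y t - z t‖ ^ 2 = Real.exp (-∫ s in 0..t, ⟪y s, w s⟫) * Real.exp (-∫ s in 0..t, ⟪z s, w s⟫)
      * ‖y 0 - z 0‖ ^ 2 := by
  have hyc : ContinuousOn y (Ici 0) := fun u hu ↦ (hy' u hu).continuousWithinAt
  have hzc : ContinuousOn z (Ici 0) := fun u hu ↦ (hz' u hu).continuousWithinAt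
  have hyw := hyc.inner (𝕜 := ℝ) hw
  have hzw := hzc.inner (𝕜 := ℝ) hw
  have hdist : ∀ u ≥ (0:ℝ), HasDerivWithinAt (fun s ↦ ‖y s - z s‖ ^ 2)
      (-(⟪y u, w u⟫ + ⟪z u, w u⟫) * ‖y u - z u‖ ^ 2) (Ici 0) u := fun u hu ↦
    ((hy' u hu).sub (hz' u hu)).norm_sq.congr_deriv
      (inner_sub_vectorModel_sub hA (w u) (hy u hu) (hz u hu))
  rw [eq_mul_exp_neg_integral_of_hasDerivWithinAt_s1 (hyw.add hzw) hdist ht, Pi.add_def,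
    intervalIntegral.integral_add (hyw.mono Icc_subset_Ici_self |>.intervalIntegrable_of_Icc ht)
      (hzw.mono Icc_subset_Ici_self |>.intervalIntegrable_of_Icc ht), neg_add, Real.exp_add]
  ring

end VectorModel

theorem Matrix.inner_toEuclideanLin_self_eq_zero {n : Type*} [Fintype n] [DecidableEq n]
    {Ω : Matrix n n ℝ} (hΩ : Ωᵀ = -Ω) (v : EuclideanSpace ℝ n) :
    ⟪v, Ω.toEuclideanLin v⟫ = 0 := by
  have h := LinearMap.adjoint_inner_left Ω.toEuclideanLin v v
  rw [← toEuclideanLin_conjTranspose_eq_adjoint, conjTranspose_eq_transpose_of_trivial, hΩ,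
    map_neg, LinearMap.neg_apply, inner_neg_left, real_inner_comm] at h
  linarith

theorem crossRatio_eq_of_norm_sub_sq_eq_mul {d : ℕ} {x₁ x₂ x₃ x₄ y₁ y₂ y₃ y₄ : Euc d}
    {c₁ c₂ c₃ c₄ : ℝ} (hc : c₁ * c₂ * c₃ * c₄ ≠ 0)
    (h₁₂ : ‖y₁ - y₂‖ ^ 2 = c₁ * c₂ * ‖x₁ - x₂‖ ^ 2)
    (h₂₃ : ‖y₂ - y₃‖ ^ 2 = c₂ * c₃ * ‖x₂ - x₃‖ ^ 2)
    (h₃₄ : ‖y₃ - y₄‖ ^ 2 = c₃ * c₄ * ‖x₃ - x₄‖ ^ 2)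
    (h₄₁ : ‖y₄ - y₁‖ ^ 2 = c₄ * c₁ * ‖x₄ - x₁‖ ^ 2) :
    crossRatio y₁ y₂ y₃ y₄ = crossRatio x₁ x₂ x₃ x₄ := by
  rw [crossRatio, crossRatio, h₁₂, h₂₃, h₃₄, h₄₁]
  conv_rhs => rw [← mul_div_mul_left _ _ hc]
  congr 1 <;> ring

theorem crossRatio_constant_of_motion_general
    (d : ℕ)
    (Ω : Matrix (Fin (d+1)) (Fin (d+1)) ℝ) (hΩ : Ωᵀ = -Ω)
    (X : ℝ → Euc d) (hX : ContinuousOn X (Set.Ici 0))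
    (x₁ x₂ x₃ x₄ : ℝ → Euc d)
    (hS : ∀ i ∈ [x₁, x₂, x₃, x₄], ∀ t ≥ (0:ℝ), ‖i t‖ = 1)
    (hODE : ∀ i ∈ [x₁, x₂, x₃, x₄], ∀ t ≥ (0:ℝ), HasDerivWithinAt i
      (Matrix.toEuclideanLin Ω (i t) + X t - ⟪i t, X t⟫ • i t) (Set.Ici 0) t) :
    ∀ t ≥ (0:ℝ), crossRatio (x₁ t) (x₂ t) (x₃ t) (x₄ t)
      = crossRatio (x₁ 0) (x₂ 0) (x₃ 0) (x₄ 0) := by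
  intro t ht
  set c : (ℝ → Euc d) → ℝ := fun x ↦ Real.exp (-∫ s in 0..t, ⟪x s, X s⟫)
  have hdist : ∀ x ∈ [x₁, x₂, x₃, x₄], ∀ y ∈ [x₁, x₂, x₃, x₄],
      ‖x t - y t‖ ^ 2 = c x * c y * ‖x 0 - y 0‖ ^ 2 := fun x hx y hy ↦
    norm_sub_sq_eq_of_hasDerivWithinAt_vectorModel (Ω.inner_toEuclideanLin_self_eq_zero hΩ) hX
      (hS x hx) (hS y hy) (hODE x hx) (hODE y hy) ht
  exact crossRatio_eq_of_norm_sub_sq_eq_mul (by positivity) (hdist x₁ (by simp) x₂ (by simp))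
    (hdist x₂ (by simp) x₃ (by simp)) (hdist x₃ (by simp) x₄ (by simp))
    (hdist x₄ (by simp) x₁ (by simp))

/-- the cross ratio is a constant of motion for the vector model on the sphere. -/
theorem crossRatio_constant_of_motion
    (d : ℕ) (hd : 1 ≤ d)
    (Ω : Matrix (Fin (d+1)) (Fin (d+1)) ℝ) (hΩ : Ωᵀ = -Ω)
    (X : ℝ → Euc d) (hX : ContinuousOn X (Set.Ici 0))
    (x₁ x₂ x₃ x₄ : ℝ → Euc d)
    (hS : ∀ i ∈ [x₁, x₂, x₃, x₄], ∀ t ≥ (0:ℝ), ‖i t‖ = 1)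
    (hODE : ∀ i ∈ [x₁, x₂, x₃, x₄], ∀ t ≥ (0:ℝ), HasDerivWithinAt i
      (Matrix.toEuclideanLin Ω (i t) + X t - ⟪i t, X t⟫ • i t) (Set.Ici 0) t)
    (h12 : x₁ 0 ≠ x₂ 0) (h23 : x₂ 0 ≠ x₃ 0) (h34 : x₃ 0 ≠ x₄ 0) (h41 : x₄ 0 ≠ x₁ 0) :
    ∀ t ≥ (0:ℝ), crossRatio (x₁ t) (x₂ t) (x₃ t) (x₄ t)
      = crossRatio (x₁ 0) (x₂ 0) (x₃ 0) (x₄ 0) :=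
  crossRatio_constant_of_motion_general d Ω hΩ X hX x₁ x₂ x₃ x₄ hS hODE
end

section
/- Let d ≥ 1, let μ be a Borel probability measure on S^d such that (μ⊗μ)({(x,y) ∈ S^d×S^d : x = y}) = 0, let w ∈ ℝ^{d+1} with ‖w‖ < 1, let R be an orthogonal (d+1)×(d+1) matrix, and let M : S^d → S^d be given by M(x) = w + (Rx + w)(1 − ‖w‖²)/‖Rx + w‖². Then for every p ∈ ℝ, ∫_{(S^d)^4} C(x1,x2,x3,x4)^p d((M#μ)⊗(M#μ)⊗(M#μ)⊗(M#μ)) = ∫_{(S^d)^4} C(x1,x2,x3,x4)^p d(μ⊗μ⊗μ⊗μ), where both sides are integrals of a nonnegative function with values in [0,∞] and M#μ denotes the pushforward of μ by M. -/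
open MeasureTheory Metric Filter Matrix
open scoped RealInnerProductSpace ENNReal

noncomputable abbrev Sph (d : ℕ) : Type := Metric.sphere (0 : Euc d) 1

/-!
On the unit sphere the map `M` is the isometry `x ↦ R x + w`, followed by the inversion about the
origin with radius `√(1 - ‖w‖²)` and the translation by `w`. Hence
`‖M x - M y‖ = ρ x * ρ y * ‖x - y‖` with the nonvanishing conformal factor
`ρ x = √(1 - ‖w‖²) / ‖R x + w‖`, and these factors cancel in the cross ratio. So the integrand is
invariant under `M` in each variable, and the identity is the change of variables for the product
of the pushforward measures.
-/

theorem Matrix.norm_toEuclideanLin_of_mul_transpose_eq_one {n : Type*} [Fintype n] [DecidableEq n]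
    {R : Matrix n n ℝ} (hR : R * Rᵀ = 1) (v : EuclideanSpace ℝ n) :
    ‖toEuclideanLin R v‖ = ‖v‖ :=
  ContinuousLinearMap.norm_map_of_mem_unitary
    (Unitary.map_mem (toEuclideanCLM (n := n) (𝕜 := ℝ))
      (mem_unitaryGroup_iff.mpr (by simpa [star_eq_conjTranspose] using hR))) v

theorem add_ne_zero_of_norm_lt_norm {E : Type*} [SeminormedAddCommGroup E] {v w : E}
    (h : ‖w‖ < ‖v‖) : v + w ≠ 0 := by
  intro hvw
  rw [add_eq_zero_iff_eq_neg.mp hvw, norm_neg] at h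
  exact lt_irrefl _ h

noncomputable def watanabeStrogatzMap {E : Type*} [NormedAddCommGroup E] [InnerProductSpace ℝ E]
    (w : E) (L : E →ₗᵢ[ℝ] E) (x : E) : E :=
  w + ((1 - ‖w‖ ^ 2) / ‖L x + w‖ ^ 2) • (L x + w)

theorem norm_sub_watanabeStrogatzMap {E : Type*} [NormedAddCommGroup E] [InnerProductSpace ℝ E]
    {w : E} (L : E →ₗᵢ[ℝ] E) (hw : ‖w‖ ≤ 1) {x y : E} (hx : L x + w ≠ 0)
    (hy : L y + w ≠ 0) :
    ‖watanabeStrogatzMap w L x - watanabeStrogatzMap w L y‖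
      = √(1 - ‖w‖ ^ 2) / ‖L x + w‖ * (√(1 - ‖w‖ ^ 2) / ‖L y + w‖) * ‖x - y‖ := by
  have hr : 0 ≤ 1 - ‖w‖ ^ 2 := by nlinarith [norm_nonneg w]
  have hinv := dist_div_norm_sq_smul hx hy √(1 - ‖w‖ ^ 2)
  rw [dist_eq_norm, dist_eq_norm, add_sub_add_right_eq_sub, ← map_sub, L.norm_map, div_pow,
    div_pow, Real.sq_sqrt hr] at hinv
  rw [watanabeStrogatzMap, watanabeStrogatzMap, add_sub_add_left_eq_sub, hinv, div_mul_div_comm,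
    Real.mul_self_sqrt hr]

theorem crossRatio_map_eq_of_norm_sub_map {d : ℕ} {s : Set (Euc d)} {f : Euc d → Euc d}
    {g : Euc d → ℝ} (hf : ∀ x ∈ s, ∀ y ∈ s, ‖f x - f y‖ = g x * g y * ‖x - y‖)
    (hg : ∀ x ∈ s, g x ≠ 0) {x₁ x₂ x₃ x₄ : Euc d} (h₁ : x₁ ∈ s) (h₂ : x₂ ∈ s) (h₃ : x₃ ∈ s)
    (h₄ : x₄ ∈ s) :
    crossRatio (f x₁) (f x₂) (f x₃) (f x₄) = crossRatio x₁ x₂ x₃ x₄ := by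
  have hK : (g x₁ * g x₂ * g x₃ * g x₄) ^ 2 ≠ 0 :=
    pow_ne_zero 2 (mul_ne_zero (mul_ne_zero (mul_ne_zero (hg _ h₁) (hg _ h₂)) (hg _ h₃)) (hg _ h₄))
  rw [crossRatio, crossRatio, hf _ h₁ _ h₂, hf _ h₃ _ h₄, hf _ h₂ _ h₃, hf _ h₄ _ h₁,
    ← mul_div_mul_left (‖x₁ - x₂‖ ^ 2 * ‖x₃ - x₄‖ ^ 2) _ hK]
  ring

theorem crossRatio_watanabeStrogatzMap {d : ℕ} {w : Euc d} (hw : ‖w‖ < 1)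
    (L : Euc d →ₗᵢ[ℝ] Euc d) {x₁ x₂ x₃ x₄ : Euc d} (h₁ : ‖x₁‖ = 1) (h₂ : ‖x₂‖ = 1)
    (h₃ : ‖x₃‖ = 1) (h₄ : ‖x₄‖ = 1) :
    crossRatio (watanabeStrogatzMap w L x₁) (watanabeStrogatzMap w L x₂)
      (watanabeStrogatzMap w L x₃) (watanabeStrogatzMap w L x₄) = crossRatio x₁ x₂ x₃ x₄ := by
  have hne : ∀ x ∈ {x : Euc d | ‖x‖ = 1}, L x + w ≠ 0 := fun x hx =>
    add_ne_zero_of_norm_lt_norm (by rwa [L.norm_map, hx])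
  refine crossRatio_map_eq_of_norm_sub_map
    (fun x hx y hy => norm_sub_watanabeStrogatzMap L hw.le (hne x hx) (hne y hy))
    (fun x hx => div_ne_zero ?_ (norm_ne_zero_iff.mpr (hne x hx))) h₁ h₂ h₃ h₄
  exact (Real.sqrt_pos.mpr (by nlinarith [norm_nonneg w])).ne'

theorem lintegral_pi_map_eq_of_forall_comp_eq {ι α : Type*} [Fintype ι] [MeasurableSpace α]
    (μ : Measure α) [IsFiniteMeasure μ] {f : α → α} (hf : Measurable f)
    {g : (ι → α) → ℝ≥0∞} (hg : Measurable g) (hgf : ∀ z, g (fun i => f (z i)) = g z) :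
    ∫⁻ z, g z ∂Measure.pi (fun _ => μ.map f) = ∫⁻ z, g z ∂Measure.pi (fun _ => μ) := by
  have hpi : MeasurePreserving (fun z i => f (z i)) (Measure.pi fun _ : ι => μ)
      (Measure.pi fun _ => μ.map f) :=
    measurePreserving_pi _ _ fun _ => ⟨hf, rfl⟩
  rw [← hpi.lintegral_comp hg]
  simp_rw [hgf]

theorem pushforward_crossRatio_integral_invariant_general
    (d : ℕ)
    (μ : Measure (Sph d)) [IsProbabilityMeasure μ]
    (w : Euc d) (hw : ‖w‖ < 1)
    (R : Matrix (Fin (d+1)) (Fin (d+1)) ℝ) (hR : R * Rᵀ = 1)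
    (M : Sph d → Sph d)
    (hM : ∀ x : Sph d, (M x : Euc d) = w +
      ((1 - ‖w‖ ^ 2) / ‖Matrix.toEuclideanLin R (x : Euc d) + w‖ ^ 2) •
        (Matrix.toEuclideanLin R (x : Euc d) + w))
    (p : ℝ) :
    ∫⁻ z : Fin 4 → Sph d,
        ENNReal.ofReal (crossRatio (z 0 : Euc d) (z 1 : Euc d) (z 2 : Euc d) (z 3 : Euc d) ^ p)
        ∂Measure.pi (fun _ => μ.map M)
      = ∫⁻ z : Fin 4 → Sph d,
        ENNReal.ofReal (crossRatio (z 0 : Euc d) (z 1 : Euc d) (z 2 : Euc d) (z 3 : Euc d) ^ p)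
        ∂Measure.pi (fun _ => μ) := by
  let L : Euc d →ₗᵢ[ℝ] Euc d :=
    ⟨Matrix.toEuclideanLin R, Matrix.norm_toEuclideanLin_of_mul_transpose_eq_one hR⟩
  have hML : ∀ x : Sph d, (M x : Euc d) = watanabeStrogatzMap w L x := hM
  have hM_meas : Measurable M :=
    Measurable.subtype_mk (f := fun x => (M x : Euc d)) (by simp_rw [hM]; fun_prop)
  have hnorm : ∀ x : Sph d, ‖(x : Euc d)‖ = 1 := fun x => norm_eq_of_mem_sphere x
  refine lintegral_pi_map_eq_of_forall_comp_eq μ hM_meas (by unfold crossRatio; fun_prop)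
    fun z => ?_
  simp only [hML]
  rw [crossRatio_watanabeStrogatzMap hw L (hnorm _) (hnorm _) (hnorm _) (hnorm _)]

/-- the pushforward of a diagonal-free Borel probability measure on the sphere
by a Watanabe–Strogatz map leaves the cross-ratio integrals invariant. -/
theorem pushforward_crossRatio_integral_invariant
    (d : ℕ) (hd : 1 ≤ d)
    (μ : Measure (Sph d)) [IsProbabilityMeasure μ]
    (hdiag : (μ.prod μ) {z : Sph d × Sph d | z.1 = z.2} = 0)
    (w : Euc d) (hw : ‖w‖ < 1)
    (R : Matrix (Fin (d+1)) (Fin (d+1)) ℝ) (hR : R * Rᵀ = 1)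
    (M : Sph d → Sph d)
    (hM : ∀ x : Sph d, (M x : Euc d) = w +
      ((1 - ‖w‖ ^ 2) / ‖Matrix.toEuclideanLin R (x : Euc d) + w‖ ^ 2) •
        (Matrix.toEuclideanLin R (x : Euc d) + w))
    (p : ℝ) :
    ∫⁻ z : Fin 4 → Sph d,
        ENNReal.ofReal (crossRatio (z 0 : Euc d) (z 1 : Euc d) (z 2 : Euc d) (z 3 : Euc d) ^ p)
        ∂Measure.pi (fun _ => μ.map M)
      = ∫⁻ z : Fin 4 → Sph d,
        ENNReal.ofReal (crossRatio (z 0 : Euc d) (z 1 : Euc d) (z 2 : Euc d) (z 3 : Euc d) ^ p)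
        ∂Measure.pi (fun _ => μ) :=
  pushforward_crossRatio_integral_invariant_general d μ w hw R hR M hM p
end

section
/- Let d ≥ 1 and let p ∈ ℝ satisfy −d/2 < p < d/2. Then H_p[ρ_uni] < ∞, i.e. the integral ∫_{(S^d)^4} C(x1,x2,x3,x4)^p dσ(x1)dσ(x2)dσ(x3)dσ(x4) is finite. -/
open MeasureTheory Metric Filter Matrix
open scoped RealInnerProductSpace ENNReal

/-- The `d`-dimensional surface (Hausdorff) measure on the sphere `S^d`. -/
noncomputable def sphereMeasure (d : ℕ) : Measure (Sph d) := μH[(d : ℝ)]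

/-- `ρ` is a probability density on the sphere: nonnegative, continuous, total mass one. -/
def IsProbDensity (d : ℕ) (ρ : Sph d → ℝ) : Prop :=
  Continuous ρ ∧ (∀ x, 0 ≤ ρ x) ∧ ∫ x, ρ x ∂sphereMeasure d = 1

/-- The functional `H_p[ρ] = ∫ C(x₁,x₂,x₃,x₄)^p ρ(x₁)ρ(x₂)ρ(x₃)ρ(x₄) dσ⁴ ∈ [0,∞]`. -/
noncomputable def Hp (d : ℕ) (p : ℝ) (ρ : Sph d → ℝ) : ℝ≥0∞ :=
  ∫⁻ x : Fin 4 → Sph d,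
    ENNReal.ofReal (crossRatio (x 0 : Euc d) (x 1 : Euc d) (x 2 : Euc d) (x 3 : Euc d) ^ p)
      * ∏ i, ENNReal.ofReal (ρ (x i))
    ∂Measure.pi (fun _ => sphereMeasure d)

/-- The uniform probability density `ρ_uni ≡ 1/σ(S^d)` on the sphere. -/
noncomputable def uniDensity (d : ℕ) : Sph d → ℝ :=
  fun _ => ((sphereMeasure d) Set.univ).toReal⁻¹

/-!
For `p ≥ 0` the numerator of the cross ratio is at most `16` on the unit sphere, so
`C(x₁,x₂,x₃,x₄)^p ≤ 16^p ‖x₂ - x₃‖^(-2p) ‖x₄ - x₁‖^(-2p)`. The two factors share no variable, so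
integrating out `x₃` and then `x₄` reduces everything to the uniform bound
`sup_x ∫ ‖x - y‖^(-2p) dσ(y) < ∞`, which holds for `2p < d`: near each of its points the sphere is
a Lipschitz graph over the tangent hyperplane, so caps of radius `r` have measure `O(r^d)`, and
these bounds are summed over the dyadic balls around `x`. For `p < 0`, rotating the four points
inverts the cross ratio, which reduces to the exponent `-p`.
-/

section SphereCaps

variable {E : Type*} [NormedAddCommGroup E] [InnerProductSpace ℝ E]

noncomputable def sphereGraph (v z : E) : E := z + √(1 - ‖z‖ ^ 2) • v

lemma lipschitzOnWith_sphereGraph {v : E} (hv : ‖v‖ = 1) :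
    LipschitzOnWith 3 (sphereGraph v) {z | ⟪v, z⟫ = 0 ∧ ‖z‖ ^ 2 ≤ 3 / 4} := by
  rw [lipschitzOnWith_iff_dist_le_mul]
  rintro z ⟨hvz, hz⟩ w ⟨hvw, hw⟩
  rw [dist_eq_norm, dist_eq_norm]
  set a := 1 - ‖z‖ ^ 2
  set b := 1 - ‖w‖ ^ 2
  have hdiff : sphereGraph v z - sphereGraph v w = (z - w) + (√a - √b) • v := by
    simp only [sphereGraph, sub_smul]; abel
  have horth : ⟪z - w, (√a - √b) • v⟫ = 0 := by
    rw [inner_smul_right, inner_sub_left, real_inner_comm, hvz, real_inner_comm, hvw]; ring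
  have hnorm_sq : ‖sphereGraph v z - sphereGraph v w‖ ^ 2 = ‖z - w‖ ^ 2 + (√a - √b) ^ 2 := by
    rw [hdiff, norm_add_sq_real, horth, norm_smul, hv, Real.norm_eq_abs, mul_one, sq_abs]; ring
  -- `√a + √b ≥ 1` on the region, so `|√a - √b| ≤ |a - b| ≤ 2 ‖z - w‖`
  have hsqrt : 1 ≤ √a + √b := by
    have h : ∀ c : ℝ, 1 / 4 ≤ c → 1 / 2 ≤ √c := fun c hc =>
      Real.le_sqrt_of_sq_le (by linarith)
    linarith [h a (by linarith), h b (by linarith)]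
  have hab : (√a - √b) * (√a + √b) = ‖w‖ ^ 2 - ‖z‖ ^ 2 := by
    nlinarith [Real.sq_sqrt (show 0 ≤ a by linarith), Real.sq_sqrt (show 0 ≤ b by linarith)]
  have hnorms : (‖w‖ ^ 2 - ‖z‖ ^ 2) ^ 2 ≤ 4 * ‖z - w‖ ^ 2 := by
    have h1 : |‖w‖ - ‖z‖| ≤ ‖z - w‖ := by rw [abs_sub_comm]; exact abs_norm_sub_norm_le z w
    have h2 : ‖w‖ + ‖z‖ ≤ 2 := by
      have : ‖z‖ ≤ 1 := by nlinarith [norm_nonneg z]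
      have : ‖w‖ ≤ 1 := by nlinarith [norm_nonneg w]
      linarith
    have h3 : (‖w‖ - ‖z‖) ^ 2 ≤ ‖z - w‖ ^ 2 := sq_le_sq' (abs_le.1 h1).1 (abs_le.1 h1).2
    nlinarith [norm_nonneg z, norm_nonneg w, sq_nonneg (‖w‖ - ‖z‖)]
  have hsq : ‖sphereGraph v z - sphereGraph v w‖ ^ 2 ≤ (3 * ‖z - w‖) ^ 2 := by
    nlinarith [sq_nonneg (√a - √b), sq_nonneg (√a + √b - 1)]
  push_cast
  exact (pow_le_pow_iff_left₀ (norm_nonneg _) (by positivity) two_ne_zero).1 hsq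

lemma sphere_inter_closedBall_subset_image_sphereGraph {v : E} (hv : ‖v‖ = 1) {r : ℝ}
    (hr : r ≤ 1) :
    sphere 0 1 ∩ closedBall v r ⊆
      sphereGraph v '' ({z | ⟪v, z⟫ = 0 ∧ ‖z‖ ^ 2 ≤ 3 / 4} ∩ closedBall 0 r) := by
  rintro y ⟨hy, hyv⟩
  rw [mem_sphere_zero_iff_norm] at hy
  rw [mem_closedBall, dist_eq_norm] at hyv
  set t := ⟪v, y⟫
  have hyv_sq : ‖y - v‖ ^ 2 = 2 - 2 * t := by
    rw [norm_sub_sq_real, hy, hv, real_inner_comm]; ring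
  have hr0 : 0 ≤ r := (norm_nonneg _).trans hyv
  have ht : 2 - 2 * t ≤ r ^ 2 := hyv_sq ▸ pow_le_pow_left₀ (norm_nonneg _) hyv 2
  have ht_half : 1 / 2 ≤ t := by nlinarith
  have hvz : ⟪v, y - t • v⟫ = 0 := by
    rw [inner_sub_right, inner_smul_right, real_inner_self_eq_norm_sq, hv]; ring
  have hz_sq : ‖y - t • v‖ ^ 2 = 1 - t ^ 2 := by
    rw [norm_sub_sq_real, inner_smul_right, norm_smul, Real.norm_eq_abs, hv, real_inner_comm,
      hy]
    simp only [mul_one, sq_abs]; ring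
  refine ⟨y - t • v, ⟨⟨hvz, by nlinarith⟩, ?_⟩, ?_⟩
  · rw [mem_closedBall, dist_zero_right]
    exact (pow_le_pow_iff_left₀ (norm_nonneg _) hr0 two_ne_zero).1 (by nlinarith)
  · rw [sphereGraph, hz_sq, sub_sub_cancel, Real.sqrt_sq (by linarith), sub_add_cancel]

variable [MeasurableSpace E] [BorelSpace E]

lemma hausdorffMeasure_sphere_inter_closedBall_congr {x v : E} (h : ‖x‖ = ‖v‖) (s R r : ℝ) :
    μH[s] (sphere (0 : E) R ∩ closedBall x r) = μH[s] (sphere (0 : E) R ∩ closedBall v r) := by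
  set ρ := Submodule.reflection (ℝ ∙ (x - v))ᗮ
  have hρ : ρ '' (sphere 0 R ∩ closedBall x r) = sphere 0 R ∩ closedBall v r := by
    rw [Set.image_inter ρ.injective, ρ.image_sphere, ρ.image_closedBall, map_zero,
      Submodule.reflection_sub h]
  rw [← hρ, ρ.isometry.hausdorffMeasure_image (Or.inr ρ.surjective)]

variable [FiniteDimensional ℝ E] {d : ℕ} [Fact (Module.finrank ℝ E = d + 1)]

lemma isAddHaarMeasure_hausdorffMeasure_orthogonal {v : E} (hv : v ≠ 0) :
    (μH[d] : Measure (ℝ ∙ v)ᗮ).IsAddHaarMeasure := by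
  have h := isAddHaarMeasure_hausdorffMeasure (E := (ℝ ∙ v)ᗮ)
  rwa [Submodule.finrank_orthogonal_span_singleton (n := d) hv] at h

lemma hausdorffMeasure_orthogonal_inter_closedBall {v : E} (hv : v ≠ 0) {r : ℝ} (hr : 0 ≤ r) :
    μH[d] (((ℝ ∙ v)ᗮ : Set E) ∩ closedBall 0 r) =
      ENNReal.ofReal (r ^ d) * μH[d] (closedBall (0 : (ℝ ∙ v)ᗮ) 1) := by
  have := isAddHaarMeasure_hausdorffMeasure_orthogonal (d := d) hv
  have hball : ((ℝ ∙ v)ᗮ : Set E) ∩ closedBall 0 r = (↑) '' closedBall (0 : (ℝ ∙ v)ᗮ) r :=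
    (Subtype.image_preimage_coe _ _).symm
  rw [hball, isometry_subtype_coe.hausdorffMeasure_image (Or.inl d.cast_nonneg),
    Measure.addHaar_closedBall' _ _ hr, Submodule.finrank_orthogonal_span_singleton (n := d) hv]

lemma hausdorffMeasure_sphere_inter_closedBall_le {v : E} (hv : ‖v‖ = 1) {r : ℝ} (hr0 : 0 ≤ r)
    (hr1 : r ≤ 1) :
    μH[d] (sphere (0 : E) 1 ∩ closedBall v r) ≤
      3 ^ d * μH[d] (closedBall (0 : (ℝ ∙ v)ᗮ) 1) * ENNReal.ofReal (r ^ d) := by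
  have hv0 : v ≠ 0 := norm_ne_zero_iff.1 (hv ▸ one_ne_zero)
  set D := {z : E | ⟪v, z⟫ = 0 ∧ ‖z‖ ^ 2 ≤ 3 / 4}
  have hD : D ∩ closedBall 0 r ⊆ ((ℝ ∙ v)ᗮ : Set E) ∩ closedBall 0 r :=
    Set.inter_subset_inter_left _ fun _ hz =>
      Submodule.mem_orthogonal_singleton_iff_inner_right.2 hz.1
  calc μH[d] (sphere (0 : E) 1 ∩ closedBall v r)
      ≤ μH[d] (sphereGraph v '' (D ∩ closedBall 0 r)) :=
        measure_mono (sphere_inter_closedBall_subset_image_sphereGraph hv hr1)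
    _ ≤ 3 ^ d * μH[d] (D ∩ closedBall 0 r) := by
        simpa using ((lipschitzOnWith_sphereGraph hv).mono
          Set.inter_subset_left).hausdorffMeasure_image_le d.cast_nonneg
    _ ≤ 3 ^ d * (ENNReal.ofReal (r ^ d) * μH[d] (closedBall (0 : (ℝ ∙ v)ᗮ) 1)) := by
        rw [← hausdorffMeasure_orthogonal_inter_closedBall hv0 hr0]
        gcongr
    _ = _ := by ring

end SphereCaps

section DyadicDecomposition

open Set

lemma ofReal_rpow_neg_le_one_add_tsum {s t : ℝ} (hs : 0 ≤ s) (ht : 0 ≤ t) :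
    ENNReal.ofReal (t ^ (-s)) ≤
      1 + ∑' k : ℕ,
        (Iic ((2 : ℝ)⁻¹ ^ k)).indicator (fun _ => ENNReal.ofReal ((2 ^ s) ^ (k + 1))) t := by
  rcases ht.eq_or_lt with rfl | ht
  · exact le_add_right (ENNReal.ofReal_le_one.2 (Real.zero_rpow_le_one _))
  rcases le_or_gt t 1 with ht1 | ht1
  · obtain ⟨k, hk, hk'⟩ := exists_nat_pow_near_of_lt_one ht ht1 (by norm_num : (0 : ℝ) < 2⁻¹)
      (by norm_num)
    refine le_add_left (le_trans ?_ (ENNReal.le_tsum k))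
    rw [indicator_of_mem (mem_Iic.2 hk')]
    refine ENNReal.ofReal_le_ofReal ((Real.rpow_le_rpow_of_nonpos (by positivity) hk.le
      (neg_nonpos.2 hs)).trans_eq ?_)
    rw [inv_pow, Real.inv_rpow (by positivity), Real.rpow_neg (by positivity), inv_inv,
      Real.rpow_pow_comm (by norm_num)]
  · exact le_add_right (ENNReal.ofReal_le_one.2
      (Real.rpow_le_one_of_one_le_of_nonpos ht1.le (neg_nonpos.2 hs)))

lemma exists_lintegral_rpow_neg_dist_le {α : Type*} [PseudoMetricSpace α] [MeasurableSpace α]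
    [OpensMeasurableSpace α] {μ : Measure α} [IsFiniteMeasure μ] {C : ℝ≥0∞} (hC : C ≠ ∞)
    {d s : ℝ} (hs : 0 ≤ s) (hsd : s < d)
    (hμ : ∀ x r, 0 < r → r ≤ 1 → μ (closedBall x r) ≤ C * ENNReal.ofReal (r ^ d)) :
    ∃ B ≠ ∞, ∀ x, ∫⁻ y, ENNReal.ofReal (dist x y ^ (-s)) ∂μ ≤ B := by
  set q : ℝ := 2 ^ s * 2⁻¹ ^ d
  have hq : q < 1 := by
    simp only [q]
    rw [Real.inv_rpow (by norm_num), ← div_eq_mul_inv, div_lt_one (by positivity)]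
    exact Real.rpow_lt_rpow_of_exponent_lt (by norm_num) hsd
  refine ⟨μ univ + C * ENNReal.ofReal (2 ^ s) * (1 - ENNReal.ofReal q)⁻¹, ?_, fun x => ?_⟩
  · have : (1 - ENNReal.ofReal q)⁻¹ ≠ ∞ :=
      ENNReal.inv_ne_top.2 (tsub_pos_of_lt (ENNReal.ofReal_lt_one.2 hq)).ne'
    finiteness
  have hterm : ∀ k : ℕ, ENNReal.ofReal ((2 ^ s) ^ (k + 1)) * μ (closedBall x (2⁻¹ ^ k)) ≤
      C * ENNReal.ofReal (2 ^ s) * ENNReal.ofReal q ^ k := by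
    intro k
    calc _ ≤ ENNReal.ofReal ((2 ^ s) ^ (k + 1)) * (C * ENNReal.ofReal ((2⁻¹ ^ k) ^ d)) := by
          gcongr; exact hμ x _ (by positivity) (pow_le_one₀ (by norm_num) (by norm_num))
      _ = _ := by
          rw [← ENNReal.ofReal_pow (by positivity), mul_left_comm, mul_assoc,
            ← ENNReal.ofReal_mul (by positivity), ← ENNReal.ofReal_mul (by positivity)]
          congr 2
          rw [← Real.rpow_pow_comm (by norm_num), pow_succ, mul_pow]; ring
  calc ∫⁻ y, ENNReal.ofReal (dist x y ^ (-s)) ∂μ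
      ≤ ∫⁻ y, 1 + ∑' k : ℕ, (closedBall x (2⁻¹ ^ k)).indicator
          (fun _ => ENNReal.ofReal ((2 ^ s) ^ (k + 1))) y ∂μ :=
        lintegral_mono fun y => (ofReal_rpow_neg_le_one_add_tsum hs dist_nonneg).trans_eq (by
          congr 1
          refine tsum_congr fun k => ?_
          simp only [indicator, mem_Iic, mem_closedBall'])
    _ = μ univ + ∑' k : ℕ, ENNReal.ofReal ((2 ^ s) ^ (k + 1)) * μ (closedBall x (2⁻¹ ^ k)) := by
        have hball : ∀ k : ℕ, MeasurableSet (closedBall x (2⁻¹ ^ k)) :=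
          fun _ => measurableSet_closedBall
        rw [lintegral_add_left measurable_const, lintegral_one,
          lintegral_tsum fun k => (measurable_const.indicator (hball k)).aemeasurable]
        simp only [lintegral_indicator_const (hball _)]
    _ ≤ μ univ + ∑' k : ℕ, C * ENNReal.ofReal (2 ^ s) * ENNReal.ofReal q ^ k :=
        add_le_add le_rfl (ENNReal.tsum_le_tsum hterm)
    _ = _ := by rw [ENNReal.tsum_mul_left, ENNReal.tsum_geometric]

end DyadicDecomposition

section Marginals

open Finset Function

lemma lintegral_pi_mul_lt_top_of_lintegral_le {ι α : Type*} [Fintype ι] [DecidableEq ι]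
    [MeasurableSpace α] {μ : Measure α} [IsFiniteMeasure μ] {F : α → α → ℝ≥0∞}
    (hF : Measurable (uncurry F)) {B : ℝ≥0∞} (hB : B ≠ ∞) (hFB : ∀ a, ∫⁻ b, F a b ∂μ ≤ B)
    {i j k l : ι} (hij : i ≠ j) (hkj : k ≠ j) (hlj : l ≠ j) (hkl : k ≠ l) :
    ∫⁻ x, F (x i) (x j) * F (x k) (x l) ∂Measure.pi (fun _ => μ) < ∞ := by
  rcases isEmpty_or_nonempty (ι → α) with h | ⟨⟨x₀⟩⟩
  · simp [lintegral_of_isEmpty]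
  have hFa : ∀ a, Measurable (F a) := fun _ => hF.of_uncurry_left
  have hFxx : ∀ i j : ι, Measurable fun x : ι → α => F (x i) (x j) := fun i j =>
    hF.fun_comp (f := fun x : ι → α => (x i, x j))
      ((measurable_pi_apply i).prodMk (measurable_pi_apply j))
  rw [lintegral_eq_lmarginal_univ x₀,
    lmarginal_erase' _ ((hFxx i j).fun_mul (hFxx k l)) (mem_univ j)]
  calc _ ≤ (∫⋯∫⁻_(univ.erase j), fun x => B * F (x k) (x l) ∂fun _ => μ) x₀ := by
        refine lmarginal_mono (fun x => ?_) x₀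
        simp only [update_of_ne hij, update_of_ne hkj, update_of_ne hlj, update_self]
        rw [lintegral_mul_const _ (hFa _)]
        gcongr
        exact hFB _
    _ = (∫⋯∫⁻_((univ.erase j).erase l), fun x => ∫⁻ y, B * F (x k) y ∂μ ∂fun _ => μ) x₀ := by
        rw [lmarginal_erase' _ ((hFxx k l).const_mul B) (mem_erase.2 ⟨hlj, mem_univ l⟩)]
        simp only [update_of_ne hkl, update_self]
    _ ≤ (∫⋯∫⁻_((univ.erase j).erase l), fun _ => B * B ∂fun _ => μ) x₀ := by
        refine lmarginal_mono (fun x => ?_) x₀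
        rw [lintegral_const_mul _ (hFa _)]
        gcongr
        exact hFB _
    _ < ∞ := by
        simp only [lmarginal, lintegral_const, Measure.pi_univ]
        exact ENNReal.mul_lt_top (ENNReal.mul_lt_top hB.lt_top hB.lt_top)
          (ENNReal.prod_lt_top fun _ _ => measure_lt_top μ _)

end Marginals

section CrossRatio

variable {d : ℕ}

lemma crossRatio_rpow_eq_rotate_rpow_neg (x1 x2 x3 x4 : Euc d) (p : ℝ) :
    crossRatio x1 x2 x3 x4 ^ p = crossRatio x2 x3 x4 x1 ^ (-p) := by
  have hrot : crossRatio x2 x3 x4 x1 = (crossRatio x1 x2 x3 x4)⁻¹ := by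
    rw [crossRatio, crossRatio, inv_div, mul_comm (‖x3 - x4‖ ^ 2)]
  have h0 : 0 ≤ crossRatio x1 x2 x3 x4 := by unfold crossRatio; positivity
  rw [hrot, Real.inv_rpow h0, Real.rpow_neg h0, inv_inv]

lemma crossRatio_rpow_le {p : ℝ} (hp : 0 ≤ p) {x1 x2 x3 x4 : Euc d} (h1 : ‖x1‖ ≤ 1)
    (h2 : ‖x2‖ ≤ 1) (h3 : ‖x3‖ ≤ 1) (h4 : ‖x4‖ ≤ 1) :
    crossRatio x1 x2 x3 x4 ^ p ≤ 16 ^ p * (‖x2 - x3‖ ^ (-(2 * p)) * ‖x4 - x1‖ ^ (-(2 * p))) := by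
  have hdiam : ∀ x y : Euc d, ‖x‖ ≤ 1 → ‖y‖ ≤ 1 → ‖x - y‖ ^ 2 ≤ 4 := fun x y hx hy => by
    have := (norm_sub_le _ _).trans (add_le_add hx hy)
    nlinarith [norm_nonneg (x - y)]
  have hnum : ‖x1 - x2‖ ^ 2 * ‖x3 - x4‖ ^ 2 ≤ 16 := by
    nlinarith [hdiam _ _ h1 h2, hdiam _ _ h3 h4, sq_nonneg ‖x1 - x2‖, sq_nonneg ‖x3 - x4‖]
  have hsq : ∀ t : ℝ, 0 ≤ t → (t ^ 2) ^ (-p) = t ^ (-(2 * p)) := fun t ht => by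
    rw [← Real.rpow_natCast, ← Real.rpow_mul ht]; push_cast; ring_nf
  calc crossRatio x1 x2 x3 x4 ^ p ≤ (16 / (‖x2 - x3‖ ^ 2 * ‖x4 - x1‖ ^ 2)) ^ p :=
        Real.rpow_le_rpow (by unfold crossRatio; positivity)
          (div_le_div_of_nonneg_right hnum (by positivity)) hp
    _ = 16 ^ p * (‖x2 - x3‖ ^ 2 * ‖x4 - x1‖ ^ 2) ^ (-p) := by
        rw [Real.div_rpow (by norm_num) (by positivity), Real.rpow_neg (by positivity),
          div_eq_mul_inv]
    _ = _ := by
        rw [Real.mul_rpow (by positivity) (by positivity), hsq _ (norm_nonneg _),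
          hsq _ (norm_nonneg _)]

end CrossRatio

lemma exists_sphereMeasure_closedBall_le (d : ℕ) :
    ∃ C ≠ ∞, ∀ (x : Sph d) (r : ℝ), 0 < r → r ≤ 1 →
      sphereMeasure d (closedBall x r) ≤ C * ENNReal.ofReal (r ^ (d : ℝ)) := by
  have : Fact (Module.finrank ℝ (Euc d) = d + 1) := ⟨finrank_euclideanSpace_fin⟩
  set v : Euc d := EuclideanSpace.single (Fin.last d) 1
  have hv : ‖v‖ = 1 := by simp [v]
  have hv0 : v ≠ 0 := norm_ne_zero_iff.1 (hv ▸ one_ne_zero)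
  have := isAddHaarMeasure_hausdorffMeasure_orthogonal (d := d) hv0
  refine ⟨3 ^ d * μH[d] (closedBall (0 : (ℝ ∙ v)ᗮ) 1),
    ENNReal.mul_ne_top (by finiteness) (isCompact_closedBall _ _).measure_lt_top.ne,
    fun x r hr0 hr1 => ?_⟩
  have hx : ‖(x : Euc d)‖ = ‖v‖ := by rw [hv, norm_eq_of_mem_sphere x]
  have hsub : ((↑) '' closedBall x r : Set (Euc d)) ⊆ sphere 0 1 ∩ closedBall (x : Euc d) r := by
    rintro _ ⟨y, hy, rfl⟩
    exact ⟨y.2, hy⟩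
  rw [sphereMeasure, ← isometry_subtype_coe.hausdorffMeasure_image (Or.inl d.cast_nonneg),
    Real.rpow_natCast]
  calc _ ≤ μH[d] (sphere (0 : Euc d) 1 ∩ closedBall (x : Euc d) r) := measure_mono hsub
    _ = μH[d] (sphere (0 : Euc d) 1 ∩ closedBall v r) :=
        hausdorffMeasure_sphere_inter_closedBall_congr hx _ _ _
    _ ≤ _ := hausdorffMeasure_sphere_inter_closedBall_le hv hr0.le hr1

instance isFiniteMeasure_sphereMeasure (d : ℕ) : IsFiniteMeasure (sphereMeasure d) := by
  obtain ⟨C, hC, hball⟩ := exists_sphereMeasure_closedBall_le d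
  have : IsLocallyFiniteMeasure (sphereMeasure d) :=
    ⟨fun x => ⟨closedBall x 1, closedBall_mem_nhds x one_pos,
      (hball x 1 one_pos le_rfl).trans_lt (by simpa using hC.lt_top)⟩⟩
  infer_instance

lemma lintegral_crossRatio_rpow_lt_top {d : ℕ} {p : ℝ} (hp : 0 ≤ p) (hpd : 2 * p < d)
    {i j k l : Fin 4} (hjk : j ≠ k) (hlk : l ≠ k) (hik : i ≠ k) (hli : l ≠ i) :
    ∫⁻ x : Fin 4 → Sph d, ENNReal.ofReal (crossRatio (x i : Euc d) (x j) (x k) (x l) ^ p)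
      ∂Measure.pi (fun _ => sphereMeasure d) < ∞ := by
  obtain ⟨C, hC, hball⟩ := exists_sphereMeasure_closedBall_le d
  obtain ⟨B, hB, hFB⟩ := exists_lintegral_rpow_neg_dist_le hC (by positivity) hpd hball
  set F := fun a b : Sph d => ENNReal.ofReal (dist a b ^ (-(2 * p)))
  have hF : Measurable (Function.uncurry F) :=
    (continuous_dist.measurable.pow_const _).ennreal_ofReal
  have hle : ∀ x : Fin 4 → Sph d, ENNReal.ofReal (crossRatio (x i : Euc d) (x j) (x k) (x l) ^ p)
      ≤ ENNReal.ofReal (16 ^ p) * (F (x j) (x k) * F (x l) (x i)) := fun x => by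
    simp only [F, Subtype.dist_eq, dist_eq_norm]
    rw [← ENNReal.ofReal_mul (by positivity), ← ENNReal.ofReal_mul (by positivity)]
    exact ENNReal.ofReal_le_ofReal (crossRatio_rpow_le hp (norm_eq_of_mem_sphere _).le
      (norm_eq_of_mem_sphere _).le (norm_eq_of_mem_sphere _).le (norm_eq_of_mem_sphere _).le)
  calc _ ≤ ∫⁻ x : Fin 4 → Sph d, ENNReal.ofReal (16 ^ p) * (F (x j) (x k) * F (x l) (x i))
        ∂Measure.pi (fun _ => sphereMeasure d) := lintegral_mono hle
    _ = ENNReal.ofReal (16 ^ p) * ∫⁻ x : Fin 4 → Sph d, F (x j) (x k) * F (x l) (x i)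
        ∂Measure.pi (fun _ => sphereMeasure d) := lintegral_const_mul' _ _ ENNReal.ofReal_ne_top
    _ < ∞ := ENNReal.mul_lt_top ENNReal.ofReal_lt_top
        (lintegral_pi_mul_lt_top_of_lintegral_le hF hB hFB hjk hlk hik hli)

lemma Hp_const (d : ℕ) (p c : ℝ) :
    Hp d p (fun _ => c) = (∫⁻ x : Fin 4 → Sph d,
      ENNReal.ofReal (crossRatio (x 0 : Euc d) (x 1 : Euc d) (x 2 : Euc d) (x 3 : Euc d) ^ p)
      ∂Measure.pi (fun _ => sphereMeasure d)) * ENNReal.ofReal c ^ 4 := by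
  simp only [Hp, Finset.prod_const, Finset.card_univ, Fintype.card_fin]
  exact lintegral_mul_const' _ _ (by finiteness)

theorem Hp_uniform_finite_of_lt_general (d : ℕ) (p : ℝ)
    (hp₁ : -(d/2 : ℝ) < p) (hp₂ : p < (d/2 : ℝ)) :
    Hp d p (uniDensity d) < ⊤ ∧
    (∫⁻ x : Fin 4 → Sph d,
        ENNReal.ofReal (crossRatio (x 0 : Euc d) (x 1 : Euc d) (x 2 : Euc d) (x 3 : Euc d) ^ p)
        ∂Measure.pi (fun _ => sphereMeasure d)) < ⊤ := by
  have hfin : (∫⁻ x : Fin 4 → Sph d,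
      ENNReal.ofReal (crossRatio (x 0 : Euc d) (x 1 : Euc d) (x 2 : Euc d) (x 3 : Euc d) ^ p)
      ∂Measure.pi (fun _ => sphereMeasure d)) < ⊤ := by
    rcases le_or_gt 0 p with hp | hp
    · exact lintegral_crossRatio_rpow_lt_top hp (by linarith) (by decide) (by decide) (by decide)
        (by decide)
    · refine lt_of_eq_of_lt (lintegral_congr fun x => ?_) (lintegral_crossRatio_rpow_lt_top
        (i := 1) (j := 2) (k := 3) (l := 0) (p := -p) (by linarith) (by linarith) (by decide)
        (by decide) (by decide) (by decide))
      rw [crossRatio_rpow_eq_rotate_rpow_neg]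
  refine ⟨?_, hfin⟩
  unfold uniDensity
  rw [Hp_const]
  exact ENNReal.mul_lt_top hfin (by finiteness)

/-- if `−d/2 < p < d/2` then `H_p[ρ_uni] < ∞`, i.e. the (unweighted) integral
of the `p`-th power of the cross ratio over `(S^d)⁴` is finite. -/
theorem Hp_uniform_finite_of_lt (d : ℕ) (hd : 1 ≤ d) (p : ℝ)
    (hp₁ : -(d/2 : ℝ) < p) (hp₂ : p < (d/2 : ℝ)) :
    Hp d p (uniDensity d) < ⊤ ∧
    (∫⁻ x : Fin 4 → Sph d,
        ENNReal.ofReal (crossRatio (x 0 : Euc d) (x 1 : Euc d) (x 2 : Euc d) (x 3 : Euc d) ^ p)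
        ∂Measure.pi (fun _ => sphereMeasure d)) < ⊤ :=
  Hp_uniform_finite_of_lt_general d p hp₁ hp₂
end

section
/- Let d ≥ 1, let Ω be a skew-symmetric (d+1)×(d+1) real matrix, let ρ be a probability density on S^d, set x_c = ∫_{S^d} y ρ(y) dσ(y) ∈ ℝ^{d+1}, and define v(y) = Ωy + x_c − ⟨y, x_c⟩y for y ∈ S^d. Then ∫_{S^d} ⟨v(y), x_c − ⟨x_c,y⟩y⟩ ρ(y) dσ(y) = ∫_{S^d} ‖x_c − ⟨y, x_c⟩y‖² ρ(y) dσ(y) ≥ 0. -/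
open MeasureTheory Metric Filter Matrix
open scoped RealInnerProductSpace ENNReal

/-! Write `P(y) = x_c − ⟨y, x_c⟩ y`. Since `⟨Ωy, y⟩ = 0`, the integrand is
`⟨Ωy, x_c⟩ ρ + ‖P(y)‖² ρ`. By skew-symmetry `⟨Ωy, x_c⟩ = −⟨Ωx_c, y⟩`, and integrating against `ρ`
turns `y` into `x_c`, so the first term contributes `−⟨Ωx_c, x_c⟩ = 0`. -/

namespace Matrix

variable {n : Type*} [Fintype n] [DecidableEq n] {Ω : Matrix n n ℝ}

theorem inner_toEuclideanLin_apply_eq_neg_of_transpose_eq_neg (hΩ : Ωᵀ = -Ω)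
    (w z : EuclideanSpace ℝ n) :
    ⟪toEuclideanLin Ω w, z⟫ = -⟪toEuclideanLin Ω z, w⟫ := by
  rw [real_inner_comm, ← LinearMap.adjoint_inner_left, ← toEuclideanLin_conjTranspose_eq_adjoint,
    conjTranspose_eq_transpose_of_trivial, hΩ, map_neg, LinearMap.neg_apply, inner_neg_left]

theorem inner_toEuclideanLin_apply_self_of_transpose_eq_neg (hΩ : Ωᵀ = -Ω)
    (w : EuclideanSpace ℝ n) : ⟪toEuclideanLin Ω w, w⟫ = 0 := by
  have := inner_toEuclideanLin_apply_eq_neg_of_transpose_eq_neg hΩ w w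
  linarith

end Matrix

theorem inner_add_sub_smul_of_inner_eq_zero {E : Type*} [NormedAddCommGroup E]
    [InnerProductSpace ℝ E] {a y : E} (ha : ⟪a, y⟫ = 0) (c : E) :
    ⟪a + c - ⟪y, c⟫ • y, c - ⟪c, y⟫ • y⟫ = ⟪a, c⟫ + ‖c - ⟪y, c⟫ • y‖ ^ 2 := by
  rw [real_inner_comm c y, add_sub_assoc, inner_add_left, real_inner_self_eq_norm_sq,
    inner_sub_right, real_inner_smul_right, ha, mul_zero, sub_zero]

theorem Continuous.memLp_top_of_compactSpace {X E : Type*} [TopologicalSpace X] [CompactSpace X]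
    [MeasurableSpace X] [OpensMeasurableSpace X] [NormedAddCommGroup E] {g : X → E}
    (hg : Continuous g) (μ : Measure X) : MemLp g ⊤ μ :=
  hg.memLp_top_of_hasCompactSupport (.of_compactSpace g) μ

theorem integral_inner_mul_eq_inner_integral_smul {α E : Type*} [MeasurableSpace α]
    {μ : Measure α} [NormedAddCommGroup E] [InnerProductSpace ℝ E] [CompleteSpace E]
    {ρ : α → ℝ} {f : α → E} (hf : Integrable (fun x => ρ x • f x) μ) (c : E) :
    ∫ x, ⟪c, f x⟫ * ρ x ∂μ = ⟪c, ∫ x, ρ x • f x ∂μ⟫ := by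
  simp_rw [← integral_inner hf, real_inner_smul_right, mul_comm]

theorem order_parameter_derivative_identity_general
    (d : ℕ)
    (Ω : Matrix (Fin (d+1)) (Fin (d+1)) ℝ) (hΩ : Ωᵀ = -Ω)
    (ρ : Sph d → ℝ) (hρ : IsProbDensity d ρ)
    (xc : Euc d) (hxc : xc = ∫ y : Sph d, ρ y • (y : Euc d) ∂sphereMeasure d)
    (v : Sph d → Euc d)
    (hv : ∀ y : Sph d, v y = Matrix.toEuclideanLin Ω (y : Euc d) + xc
      - ⟪(y : Euc d), xc⟫ • (y : Euc d)) :
    (∫ y : Sph d, ⟪v y, xc - ⟪xc, (y : Euc d)⟫ • (y : Euc d)⟫ * ρ y ∂sphereMeasure d)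
      = ∫ y : Sph d, ‖xc - ⟪(y : Euc d), xc⟫ • (y : Euc d)‖ ^ 2 * ρ y ∂sphereMeasure d ∧
    0 ≤ ∫ y : Sph d, ‖xc - ⟪(y : Euc d), xc⟫ • (y : Euc d)‖ ^ 2 * ρ y ∂sphereMeasure d := by
  obtain ⟨-, hρ_nonneg, hρ_mass⟩ := hρ
  have hρ_int : Integrable ρ (sphereMeasure d) := .of_integral_ne_zero (by simp [hρ_mass])
  have hmul_int {g : Sph d → ℝ} (hg : Continuous g) :
      Integrable (fun y => g y * ρ y) (sphereMeasure d) :=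
    hρ_int.mul_of_top_right (hg.memLp_top_of_compactSpace _)
  have hdrift : ∫ y : Sph d, ⟪toEuclideanLin Ω y, xc⟫ * ρ y ∂sphereMeasure d = 0 := by
    simp_rw [inner_toEuclideanLin_apply_eq_neg_of_transpose_eq_neg hΩ _ xc, neg_mul]
    rw [integral_neg, integral_inner_mul_eq_inner_integral_smul
      (hρ_int.smul_of_top_left (continuous_subtype_val.memLp_top_of_compactSpace _)), ← hxc,
      inner_toEuclideanLin_apply_self_of_transpose_eq_neg hΩ, neg_zero]
  refine ⟨?_, integral_nonneg fun y => mul_nonneg (sq_nonneg _) (hρ_nonneg y)⟩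
  simp_rw [hv, inner_add_sub_smul_of_inner_eq_zero
    (inner_toEuclideanLin_apply_self_of_transpose_eq_neg hΩ _), add_mul]
  rw [integral_add (hmul_int (by fun_prop)) (hmul_int (by fun_prop)), hdrift, zero_add]

/-- the identity behind the derivative formula for the order parameter of the
kinetic swarm sphere model:
`∫ ⟨v(y), x_c − ⟨x_c,y⟩y⟩ ρ(y) dσ = ∫ ‖x_c − ⟨y,x_c⟩y‖² ρ(y) dσ ≥ 0`. -/
theorem order_parameter_derivative_identity
    (d : ℕ) (hd : 1 ≤ d)
    (Ω : Matrix (Fin (d+1)) (Fin (d+1)) ℝ) (hΩ : Ωᵀ = -Ω)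
    (ρ : Sph d → ℝ) (hρ : IsProbDensity d ρ)
    (xc : Euc d) (hxc : xc = ∫ y : Sph d, ρ y • (y : Euc d) ∂sphereMeasure d)
    (v : Sph d → Euc d)
    (hv : ∀ y : Sph d, v y = Matrix.toEuclideanLin Ω (y : Euc d) + xc
      - ⟪(y : Euc d), xc⟫ • (y : Euc d)) :
    (∫ y : Sph d, ⟪v y, xc - ⟪xc, (y : Euc d)⟫ • (y : Euc d)⟫ * ρ y ∂sphereMeasure d)
      = ∫ y : Sph d, ‖xc - ⟪(y : Euc d), xc⟫ • (y : Euc d)‖ ^ 2 * ρ y ∂sphereMeasure d ∧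
    0 ≤ ∫ y : Sph d, ‖xc - ⟪(y : Euc d), xc⟫ • (y : Euc d)‖ ^ 2 * ρ y ∂sphereMeasure d :=
  order_parameter_derivative_identity_general d Ω hΩ ρ hρ xc hxc v hv
end

section
/- Let d ≥ 1. Let (ρ_t)_{t≥0} be a family of probability densities on S^d, let γ : [0,∞) → S^d, define R(t) = ∫_{S^d} ⟨y, γ(t)⟩ ρ_t(y) dσ(y), and assume: R(t) > 0 for all t ≥ 0; R(t) → R^∞ as t → ∞ for some R^∞ ∈ (0,1]; and ∫_{S^d} (1 − ⟨y, γ(t)⟩²) ρ_t(y) dσ(y) → 0 as t → ∞. Then for every ε ∈ (0, √2): ∫_{B_ε(γ(t))} ρ_t dσ → (1 + R^∞)/2 and ∫_{B_ε(−γ(t))} ρ_t dσ → (1 − R^∞)/2 as t → ∞. -/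
open MeasureTheory Metric Filter Matrix
open scoped RealInnerProductSpace ENNReal

/-! Write `f y = ⟪y, γ t⟫ ∈ [-1, 1]` and `δ = 1 - ε²/2 ∈ [0, 1)`. On the unit sphere the balls
`B_ε(±γ t)` are the caps `{f > δ}` and `{f < -δ}`, and pointwise both
`|1_{f > δ} - 1_{f < -δ} - f|` and `|1_{f > δ} + 1_{f < -δ} - 1|` are at most
`(1 - f²) / (1 - δ²)`. Integrating against `ρ_t`, the difference of the two cap masses is
within `(1 - δ²)⁻¹ ∫ (1 - f²) ρ_t` of `R(t)` and their sum is within the same error of `1`. The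
variance hypothesis sends the error to `0`, so the difference tends to `R^∞` and the sum to `1`. -/

section Pointwise

variable {δ x : ℝ}

theorem abs_indicator_sub_indicator_sub_le (hδ0 : 0 ≤ δ) (hδ1 : δ < 1) (hx : |x| ≤ 1) :
    |(Set.Ioi δ).indicator 1 x - (Set.Iio (-δ)).indicator 1 x - x|
      ≤ (1 - δ ^ 2)⁻¹ * (1 - x ^ 2) := by
  rw [le_inv_mul_iff₀ (by nlinarith)]
  obtain ⟨hx₁, hx₂⟩ := abs_le.1 hx
  by_cases hp : δ < x <;> by_cases hn : x < -δ <;>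
    simp only [Set.indicator_apply, Set.mem_Ioi, Set.mem_Iio, hp, hn, if_true, if_false,
      Pi.one_apply]
  · linarith
  · rw [abs_of_nonneg (by linarith)]; nlinarith
  · rw [abs_of_nonpos (by linarith)]; nlinarith
  · rw [sub_zero, zero_sub, abs_neg]
    have hxδ : |x| ≤ δ := abs_le.2 ⟨by linarith, by linarith⟩
    have h₁ : (1 - δ ^ 2) * |x| ≤ 1 - δ ^ 2 := mul_le_of_le_one_right (by nlinarith) hx
    have h₂ : x ^ 2 ≤ δ ^ 2 := by rw [← sq_abs]; exact pow_le_pow_left₀ (abs_nonneg x) hxδ 2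
    linarith

theorem abs_indicator_add_indicator_sub_one_le (hδ0 : 0 ≤ δ) (hδ1 : δ < 1) (hx : |x| ≤ 1) :
    |(Set.Ioi δ).indicator 1 x + (Set.Iio (-δ)).indicator 1 x - 1|
      ≤ (1 - δ ^ 2)⁻¹ * (1 - x ^ 2) := by
  rw [le_inv_mul_iff₀ (by nlinarith)]
  obtain ⟨hx₁, hx₂⟩ := abs_le.1 hx
  by_cases hp : δ < x <;> by_cases hn : x < -δ <;>
    simp only [Set.indicator_apply, Set.mem_Ioi, Set.mem_Iio, hp, hn, if_true, if_false,
      Pi.one_apply]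
  · linarith
  · norm_num; nlinarith
  · norm_num; nlinarith
  · norm_num; nlinarith

end Pointwise

section Concentration

variable {α : Type*} [MeasurableSpace α] {μ : Measure α} {ρ f : α → ℝ} {δ : ℝ}

theorem setIntegral_preimage_eq_integral_indicator_mul (hf : Measurable f) {s : Set ℝ}
    (hs : MeasurableSet s) :
    ∫ x in f ⁻¹' s, ρ x ∂μ = ∫ x, s.indicator 1 (f x) * ρ x ∂μ := by
  rw [← integral_indicator (hf hs)]
  congr 1 with x
  by_cases hx : f x ∈ s <;> simp [hx]

theorem MeasureTheory.Integrable.indicator_comp_mul (hρ : Integrable ρ μ) (hf : Measurable f)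
    {s : Set ℝ} (hs : MeasurableSet s) : Integrable (fun x => s.indicator 1 (f x) * ρ x) μ :=
  hρ.bdd_mul (c := 1) ((measurable_one.indicator hs).comp hf).aestronglyMeasurable
    (ae_of_all _ fun x => by by_cases hx : f x ∈ s <;> simp [hx])

theorem abs_integral_mul_le_integral_mul (hρ0 : ∀ x, 0 ≤ ρ x) {φ ψ : α → ℝ}
    (hψ : Integrable (fun x => ψ x * ρ x) μ) (hφψ : ∀ x, |φ x| ≤ ψ x) :
    |∫ x, φ x * ρ x ∂μ| ≤ ∫ x, ψ x * ρ x ∂μ :=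
  norm_integral_le_of_norm_le (f := fun x => φ x * ρ x) hψ (ae_of_all _ fun x => by
    rw [Real.norm_eq_abs, abs_mul, abs_of_nonneg (hρ0 x)]
    exact mul_le_mul_of_nonneg_right (hφψ x) (hρ0 x))

theorem integrable_const_mul_one_sub_sq_mul (hρ : Integrable ρ μ) (hf : Measurable f)
    (hf1 : ∀ x, |f x| ≤ 1) (c : ℝ) :
    Integrable (fun x => c * (1 - f x ^ 2) * ρ x) μ :=
  hρ.bdd_mul (c := |c|) (by fun_prop) (ae_of_all _ fun x => by
    have h₀ : 0 ≤ 1 - f x ^ 2 := sub_nonneg.2 ((sq_le_one_iff_abs_le_one _).2 (hf1 x))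
    rw [Real.norm_eq_abs, abs_mul, abs_of_nonneg h₀]
    exact mul_le_of_le_one_right (abs_nonneg c) (by nlinarith [sq_nonneg (f x)]))

variable (hρ0 : ∀ x, 0 ≤ ρ x) (hρ : Integrable ρ μ) (hf : Measurable f) (hf1 : ∀ x, |f x| ≤ 1)
  (hδ0 : 0 ≤ δ) (hδ1 : δ < 1)
include hρ0 hρ hf hf1 hδ0 hδ1

theorem abs_setIntegral_sub_setIntegral_sub_integral_mul_le :
    |(∫ x in f ⁻¹' Set.Ioi δ, ρ x ∂μ) - (∫ x in f ⁻¹' Set.Iio (-δ), ρ x ∂μ)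
        - ∫ x, f x * ρ x ∂μ|
      ≤ (1 - δ ^ 2)⁻¹ * ∫ x, (1 - f x ^ 2) * ρ x ∂μ := by
  have hp := hρ.indicator_comp_mul hf (measurableSet_Ioi (a := δ))
  have hn := hρ.indicator_comp_mul hf (measurableSet_Iio (a := -δ))
  have hfρ : Integrable (fun x => f x * ρ x) μ :=
    hρ.bdd_mul (c := 1) hf.aestronglyMeasurable (ae_of_all _ hf1)
  calc _ = |∫ x, ((Set.Ioi δ).indicator 1 (f x) - (Set.Iio (-δ)).indicator 1 (f x) - f x)
          * ρ x ∂μ| := by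
        rw [setIntegral_preimage_eq_integral_indicator_mul hf measurableSet_Ioi,
          setIntegral_preimage_eq_integral_indicator_mul hf measurableSet_Iio,
          ← integral_sub hp hn, ← integral_sub (hp.sub hn : Integrable (fun x => _ - _) μ) hfρ]
        simp only [sub_mul]
    _ ≤ ∫ x, (1 - δ ^ 2)⁻¹ * (1 - f x ^ 2) * ρ x ∂μ :=
        abs_integral_mul_le_integral_mul hρ0
          (integrable_const_mul_one_sub_sq_mul hρ hf hf1 _) fun x =>
          abs_indicator_sub_indicator_sub_le hδ0 hδ1 (hf1 x)
    _ = _ := by simp only [mul_assoc, integral_const_mul]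

theorem abs_setIntegral_add_setIntegral_sub_integral_le :
    |(∫ x in f ⁻¹' Set.Ioi δ, ρ x ∂μ) + (∫ x in f ⁻¹' Set.Iio (-δ), ρ x ∂μ) - ∫ x, ρ x ∂μ|
      ≤ (1 - δ ^ 2)⁻¹ * ∫ x, (1 - f x ^ 2) * ρ x ∂μ := by
  have hp := hρ.indicator_comp_mul hf (measurableSet_Ioi (a := δ))
  have hn := hρ.indicator_comp_mul hf (measurableSet_Iio (a := -δ))
  calc _ = |∫ x, ((Set.Ioi δ).indicator 1 (f x) + (Set.Iio (-δ)).indicator 1 (f x) - 1)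
          * ρ x ∂μ| := by
        rw [setIntegral_preimage_eq_integral_indicator_mul hf measurableSet_Ioi,
          setIntegral_preimage_eq_integral_indicator_mul hf measurableSet_Iio,
          ← integral_add hp hn, ← integral_sub (hp.add hn : Integrable (fun x => _ + _) μ) hρ]
        simp only [sub_mul, add_mul, one_mul]
    _ ≤ ∫ x, (1 - δ ^ 2)⁻¹ * (1 - f x ^ 2) * ρ x ∂μ :=
        abs_integral_mul_le_integral_mul hρ0
          (integrable_const_mul_one_sub_sq_mul hρ hf hf1 _) fun x =>
          abs_indicator_add_indicator_sub_one_le hδ0 hδ1 (hf1 x)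
    _ = _ := by simp only [mul_assoc, integral_const_mul]

end Concentration

section UnitSphere

variable {E : Type*} [NormedAddCommGroup E] [InnerProductSpace ℝ E] {ε : ℝ}

theorem norm_sub_lt_iff_lt_inner {x y : E} (hx : ‖x‖ = 1) (hy : ‖y‖ = 1) (hε : 0 < ε) :
    ‖x - y‖ < ε ↔ 1 - ε ^ 2 / 2 < ⟪y, x⟫ := by
  rw [← sq_lt_sq₀ (norm_nonneg _) hε.le, norm_sub_sq_real, hx, hy, real_inner_comm]
  constructor <;> intro h <;> linarith

theorem setOf_norm_sub_lt_eq_preimage_Ioi (g : sphere (0 : E) 1) (hε : 0 < ε) :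
    {y : sphere (0 : E) 1 | ‖(g : E) - y‖ < ε}
      = (fun y : sphere (0 : E) 1 => ⟪(y : E), g⟫) ⁻¹' Set.Ioi (1 - ε ^ 2 / 2) := by
  ext y
  exact norm_sub_lt_iff_lt_inner (norm_eq_of_mem_sphere g) (norm_eq_of_mem_sphere y) hε

theorem setOf_norm_neg_sub_lt_eq_preimage_Iio (g : sphere (0 : E) 1) (hε : 0 < ε) :
    {y : sphere (0 : E) 1 | ‖-(g : E) - y‖ < ε}
      = (fun y : sphere (0 : E) 1 => ⟪(y : E), g⟫) ⁻¹' Set.Iio (-(1 - ε ^ 2 / 2)) := by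
  ext y
  rw [Set.mem_ofPred_eq, norm_sub_lt_iff_lt_inner (by simp) (norm_eq_of_mem_sphere y) hε,
    inner_neg_right]
  exact lt_neg

theorem abs_inner_le_one_of_mem_sphere (y g : sphere (0 : E) 1) : |⟪(y : E), g⟫| ≤ 1 :=
  abs_le.2 (real_inner_mem_Icc_of_norm_eq_one (norm_eq_of_mem_sphere y) (norm_eq_of_mem_sphere g))

variable [MeasurableSpace E] [BorelSpace E] {μ : Measure (sphere (0 : E) 1)}
  {ρ : sphere (0 : E) 1 → ℝ} (hρ0 : ∀ y, 0 ≤ ρ y) (hρ : Integrable ρ μ) (g : sphere (0 : E) 1)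
  (hε0 : 0 < ε) (hε2 : ε ^ 2 ≤ 2)
include hρ0 hρ hε0 hε2

theorem abs_setIntegral_ball_sub_setIntegral_ball_neg_sub_le :
    |(∫ y in {y | ‖(g : E) - y‖ < ε}, ρ y ∂μ) - (∫ y in {y | ‖-(g : E) - y‖ < ε}, ρ y ∂μ)
        - ∫ y, ⟪(y : E), g⟫ * ρ y ∂μ|
      ≤ (1 - (1 - ε ^ 2 / 2) ^ 2)⁻¹ * ∫ y, (1 - ⟪(y : E), g⟫ ^ 2) * ρ y ∂μ := by
  rw [setOf_norm_sub_lt_eq_preimage_Ioi g hε0, setOf_norm_neg_sub_lt_eq_preimage_Iio g hε0]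
  exact abs_setIntegral_sub_setIntegral_sub_integral_mul_le hρ0 hρ (by fun_prop)
    (abs_inner_le_one_of_mem_sphere · g) (by linarith) (by nlinarith)

theorem abs_setIntegral_ball_add_setIntegral_ball_neg_sub_le :
    |(∫ y in {y | ‖(g : E) - y‖ < ε}, ρ y ∂μ) + (∫ y in {y | ‖-(g : E) - y‖ < ε}, ρ y ∂μ)
        - ∫ y, ρ y ∂μ|
      ≤ (1 - (1 - ε ^ 2 / 2) ^ 2)⁻¹ * ∫ y, (1 - ⟪(y : E), g⟫ ^ 2) * ρ y ∂μ := by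
  rw [setOf_norm_sub_lt_eq_preimage_Ioi g hε0, setOf_norm_neg_sub_lt_eq_preimage_Iio g hε0]
  exact abs_setIntegral_add_setIntegral_sub_integral_le hρ0 hρ (by fun_prop)
    (abs_inner_le_one_of_mem_sphere · g) (by linarith) (by nlinarith)

end UnitSphere

theorem Filter.Tendsto.of_abs_sub_le {β : Type*} {l : Filter β} {u v w : β → ℝ} {L : ℝ}
    (hv : Tendsto v l (nhds L)) (hw : Tendsto w l (nhds 0))
    (huv : ∀ᶠ t in l, |u t - v t| ≤ w t) :
    Tendsto u l (nhds L) :=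
  hv.congr_dist <| squeeze_zero' (Eventually.of_forall fun _ => dist_nonneg)
    (huv.mono fun t ht => by rwa [Real.dist_eq, abs_sub_comm]) hw

theorem IsProbDensity.integrable {d : ℕ} {ρ : Sph d → ℝ} (hρ : IsProbDensity d ρ) :
    Integrable ρ (sphereMeasure d) :=
  Integrable.of_integral_ne_zero (by rw [hρ.2.2]; exact one_ne_zero)

theorem bipolar_concentration_general
    (d : ℕ)
    (ρ : ℝ → Sph d → ℝ) (hρ : ∀ t ≥ (0:ℝ), IsProbDensity d (ρ t))
    (γ : ℝ → Sph d) (R : ℝ → ℝ)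
    (hR : ∀ t, R t = ∫ y : Sph d, ⟪(y : Euc d), (γ t : Euc d)⟫ * ρ t y ∂sphereMeasure d)
    (Rinf : ℝ)
    (hRconv : Filter.Tendsto R Filter.atTop (nhds Rinf))
    (hvar : Filter.Tendsto
      (fun t => ∫ y : Sph d, (1 - ⟪(y : Euc d), (γ t : Euc d)⟫ ^ 2) * ρ t y ∂sphereMeasure d)
      Filter.atTop (nhds 0)) :
    ∀ ε ∈ Set.Ioo (0:ℝ) (Real.sqrt 2),
      Filter.Tendsto
        (fun t => ∫ y in {y : Sph d | ‖(γ t : Euc d) - (y : Euc d)‖ < ε}, ρ t y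
          ∂sphereMeasure d) Filter.atTop (nhds ((1 + Rinf)/2)) ∧
      Filter.Tendsto
        (fun t => ∫ y in {y : Sph d | ‖-(γ t : Euc d) - (y : Euc d)‖ < ε}, ρ t y
          ∂sphereMeasure d) Filter.atTop (nhds ((1 - Rinf)/2)) := by
  rintro ε ⟨hε0, hε2⟩
  have hε2' : ε ^ 2 ≤ 2 := ((Real.lt_sqrt hε0.le).1 hε2).le
  set a := fun t => ∫ y in {y : Sph d | ‖(γ t : Euc d) - (y : Euc d)‖ < ε}, ρ t y ∂sphereMeasure d
  set b := fun t => ∫ y in {y : Sph d | ‖-(γ t : Euc d) - (y : Euc d)‖ < ε}, ρ t y ∂sphereMeasure d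
  have hdens : ∀ᶠ t in atTop, IsProbDensity d (ρ t) := (eventually_ge_atTop 0).mono hρ
  have hbound := hvar.const_mul (1 - (1 - ε ^ 2 / 2) ^ 2)⁻¹
  rw [mul_zero] at hbound
  have hdiff : Tendsto (fun t => a t - b t) atTop (nhds Rinf) :=
    hRconv.of_abs_sub_le hbound <| hdens.mono fun t ht => hR t ▸
      abs_setIntegral_ball_sub_setIntegral_ball_neg_sub_le ht.2.1 ht.integrable (γ t) hε0 hε2'
  have hsum : Tendsto (fun t => a t + b t) atTop (nhds 1) :=
    tendsto_const_nhds.of_abs_sub_le hbound <| hdens.mono fun t ht => by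
      have h := abs_setIntegral_ball_add_setIntegral_ball_neg_sub_le ht.2.1 ht.integrable (γ t)
        hε0 hε2'
      rwa [ht.2.2] at h
  exact ⟨((hsum.add hdiff).div_const 2).congr fun t => by ring,
    ((hsum.sub hdiff).div_const 2).congr fun t => by ring⟩

/-- emergence of a bipolar state: under the stated hypotheses on the order
parameter `R(t) = ∫ ⟨y, γ(t)⟩ ρ_t(y) dσ(y)`, the mass concentrates at `γ(t)` and `−γ(t)`
with weights `(1 ± R^∞)/2`. -/
theorem bipolar_concentration
    (d : ℕ) (hd : 1 ≤ d)
    (ρ : ℝ → Sph d → ℝ) (hρ : ∀ t ≥ (0:ℝ), IsProbDensity d (ρ t))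
    (γ : ℝ → Sph d) (R : ℝ → ℝ)
    (hR : ∀ t, R t = ∫ y : Sph d, ⟪(y : Euc d), (γ t : Euc d)⟫ * ρ t y ∂sphereMeasure d)
    (hRpos : ∀ t ≥ (0:ℝ), 0 < R t)
    (Rinf : ℝ) (hRinf : Rinf ∈ Set.Ioc (0:ℝ) 1)
    (hRconv : Filter.Tendsto R Filter.atTop (nhds Rinf))
    (hvar : Filter.Tendsto
      (fun t => ∫ y : Sph d, (1 - ⟪(y : Euc d), (γ t : Euc d)⟫ ^ 2) * ρ t y ∂sphereMeasure d)
      Filter.atTop (nhds 0)) :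
    ∀ ε ∈ Set.Ioo (0:ℝ) (Real.sqrt 2),
      Filter.Tendsto
        (fun t => ∫ y in {y : Sph d | ‖(γ t : Euc d) - (y : Euc d)‖ < ε}, ρ t y
          ∂sphereMeasure d) Filter.atTop (nhds ((1 + Rinf)/2)) ∧
      Filter.Tendsto
        (fun t => ∫ y in {y : Sph d | ‖-(γ t : Euc d) - (y : Euc d)‖ < ε}, ρ t y
          ∂sphereMeasure d) Filter.atTop (nhds ((1 - Rinf)/2)) :=
  bipolar_concentration_general d ρ hρ γ R hR Rinf hRconv hvar
end
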